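/- arXiv:1306.4683 — 2 statements merged into one kernel-verified Lean document; each statement's English description precedes it below -/
import Mathlib

section
/- Let n ≥ 1 and 0 ≤ θ < π/2 with tan(θ/2) < 2^{1/n} − 1. With Ψ_x ∈ ℂ^{2^n} defined by Ψ_x(r) = (−1)^{x·r} cos(θ/2)^{n−|r|} sin(θ/2)^{|r|}, and N the diagonal 2^n × 2^n matrix with entry C(θ) at index 0⃗ and entry −C(θ) tan(θ/2)^{|r|} at each index r ≠ 0⃗, where C(θ) = 2^{−n} cos(θ/2)^{2n} (2 − (1 + tan(θ/2))^n), the matrix 2^{−n} |Ψ_x⟩⟨Ψ_x| − N is positive semidefinite for every x ∈ {0,1}^n. (Feasibility of the dual certificate in the PBR game.) -/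
open BigOperators Matrix ComplexOrder

/-- The dot product `x·r = ∑ᵢ xᵢ rᵢ` of two bit strings. -/
def bdot {n : ℕ} (x r : Fin n → Bool) : ℕ :=
  ∑ i, if x i ∧ r i then 1 else 0

/-- The Hamming weight `|r| = ∑ᵢ rᵢ` of a bit string. -/
def hamming {n : ℕ} (r : Fin n → Bool) : ℕ :=
  ∑ i, if r i then 1 else 0

/-!
With `t = tan(θ/2)` and `c = cos(θ/2)` we have `Ψₓ = cⁿ a` where `a 0⃗ = 1` and `|a r| = t^|r|`,
and the matrix in question is `2⁻ⁿ c²ⁿ (a a* - (1 - K) D)` with `D = diag(1, -t^|r|)` and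
`K = ∑_{r ≠ 0⃗} t^|r| = (1 + t)ⁿ - 1`, and `K < 1` because `1 + t < 2^{1/n}`.
Writing `z = v 0⃗`, `S = ∑_{r ≠ 0⃗} conj (a r) v r` and `W = ∑_{r ≠ 0⃗} t^|r| |v r|²`, the quadratic
form of `a a* - (1 - K) D` is `|z + S|² - (1 - K)|z|² + (1 - K) W`. Cauchy–Schwarz gives
`|S|² ≤ K W`, and then `K` times the form is at least `(K|z| - |S|)² + (1 - K)(K W - |S|²) ≥ 0`.
-/

open Finset

lemma one_sub_mul_norm_sq_le {E : Type*} [SeminormedAddCommGroup E] {z S : E} {K W : ℝ}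
    (hK₀ : 0 ≤ K) (hK₁ : K ≤ 1) (hW : 0 ≤ W) (hS : ‖S‖ ^ 2 ≤ K * W) :
    (1 - K) * ‖z‖ ^ 2 ≤ ‖z + S‖ ^ 2 + (1 - K) * W := by
  have hzS : (‖z‖ - ‖S‖) ^ 2 ≤ ‖z + S‖ ^ 2 := by
    have h := abs_norm_sub_norm_le z (-S)
    rw [norm_neg, sub_neg_eq_add] at h
    exact sq_le_sq' (abs_le.mp h).1 (abs_le.mp h).2
  rcases hK₀.eq_or_lt with rfl | hK
  · have : ‖S‖ = 0 := by nlinarith [norm_nonneg S]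
    rw [this] at hzS
    nlinarith
  · suffices 0 ≤ K * ((‖z‖ - ‖S‖) ^ 2 + (1 - K) * W - (1 - K) * ‖z‖ ^ 2) by nlinarith
    nlinarith [sq_nonneg (K * ‖z‖ - ‖S‖)]

lemma norm_sum_mul_sq_le {ι R : Type*} [SeminormedRing R] (s : Finset ι) (a v : ι → R)
    (w : ι → ℝ) (ha : ∀ i ∈ s, ‖a i‖ ≤ w i) :
    ‖∑ i ∈ s, a i * v i‖ ^ 2 ≤ (∑ i ∈ s, w i) * ∑ i ∈ s, w i * ‖v i‖ ^ 2 := by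
  have hw : ∀ i ∈ s, 0 ≤ w i := fun i hi => (norm_nonneg _).trans (ha i hi)
  calc ‖∑ i ∈ s, a i * v i‖ ^ 2 ≤ (∑ i ∈ s, w i * ‖v i‖) ^ 2 := by
        gcongr
        refine (norm_sum_le _ _).trans (sum_le_sum fun i hi => ?_)
        exact (norm_mul_le _ _).trans (by gcongr; exact ha i hi)
    _ ≤ _ := sum_sq_le_sum_mul_sum_of_sq_le_mul s hw
        (fun i hi => mul_nonneg (hw i hi) (sq_nonneg _)) (fun i _ => (by ring : _ = _).le)

section QuadraticForm

variable {ι 𝕜 : Type*} [Fintype ι] [RCLike 𝕜]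

lemma star_dotProduct_vecMulVec_mulVec (a v : ι → 𝕜) :
    star v ⬝ᵥ (vecMulVec a (star a) *ᵥ v) = ((‖star a ⬝ᵥ v‖ ^ 2 : ℝ) : 𝕜) := by
  rw [vecMulVec_mulVec, op_smul_eq_smul, dotProduct_smul, smul_eq_mul, RCLike.ofReal_pow,
    ← RCLike.mul_conj, ← RCLike.star_def, star_dotProduct, star_star, dotProduct_comm (star v)]

lemma star_dotProduct_diagonal_mulVec [DecidableEq ι] (d : ι → ℝ) (v : ι → 𝕜) :
    star v ⬝ᵥ (diagonal (fun i => (d i : 𝕜)) *ᵥ v) = ((∑ i, d i * ‖v i‖ ^ 2 : ℝ) : 𝕜) := by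
  simp only [dotProduct, mulVec_diagonal, Pi.star_apply, RCLike.ofReal_sum, RCLike.ofReal_mul,
    RCLike.ofReal_pow, ← RCLike.conj_mul, RCLike.star_def]
  exact sum_congr rfl fun i _ => by ring

theorem posSemidef_vecMulVec_sub_diagonal [DecidableEq ι] (i₀ : ι) (a : ι → 𝕜) (w : ι → ℝ)
    (ha₀ : a i₀ = 1) (ha : ∀ i ≠ i₀, ‖a i‖ ≤ w i) (hK : ∑ i ∈ univ.erase i₀, w i ≤ 1) :
    (vecMulVec a (star a) - diagonal (fun i =>
      (((1 - ∑ j ∈ univ.erase i₀, w j) * if i = i₀ then 1 else -w i : ℝ) : 𝕜))).PosSemidef := by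
  set K := ∑ j ∈ univ.erase i₀, w j
  have ha' : ∀ i ∈ univ.erase i₀, ‖star (a i)‖ ≤ w i := fun i hi => by
    rw [norm_star]; exact ha i (ne_of_mem_erase hi)
  have hK₀ : 0 ≤ K := sum_nonneg fun i hi => (norm_nonneg _).trans (ha' i hi)
  refine .of_dotProduct_mulVec_nonneg
    ((posSemidef_vecMulVec_self_star a).isHermitian.sub
      (isHermitian_diagonal_iff.mpr fun i => RCLike.conj_ofReal _)) fun v => ?_
  set W := ∑ i ∈ univ.erase i₀, w i * ‖v i‖ ^ 2
  have hW : 0 ≤ W := sum_nonneg fun i hi =>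
    mul_nonneg ((norm_nonneg _).trans (ha' i hi)) (sq_nonneg _)
  have hT : star a ⬝ᵥ v = v i₀ + ∑ i ∈ univ.erase i₀, star (a i) * v i := by
    rw [dotProduct, ← add_sum_erase _ _ (mem_univ i₀)]
    simp [ha₀]
  have hD : ∑ i, ((1 - K) * (if i = i₀ then 1 else -w i)) * ‖v i‖ ^ 2
      = (1 - K) * ‖v i₀‖ ^ 2 - (1 - K) * W := by
    rw [← add_sum_erase _ _ (mem_univ i₀), if_pos rfl, mul_one,
      sub_eq_add_neg ((1 - K) * _), mul_sum, ← sum_neg_distrib]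
    exact congrArg _ (sum_congr rfl fun i hi => by rw [if_neg (ne_of_mem_erase hi)]; ring)
  rw [sub_mulVec, dotProduct_sub, star_dotProduct_vecMulVec_mulVec,
    star_dotProduct_diagonal_mulVec, ← RCLike.ofReal_sub, RCLike.ofReal_nonneg, hD, hT]
  linarith [one_sub_mul_norm_sq_le (z := v i₀) hK₀ hK hW (norm_sum_mul_sq_le _ _ v w ha')]

end QuadraticForm

lemma hamming_le {n : ℕ} (r : Fin n → Bool) : hamming r ≤ n :=
  calc hamming r ≤ ∑ _i : Fin n, 1 := sum_le_sum fun i _ => by split <;> simp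
    _ = n := by simp

@[simp] lemma hamming_zero {n : ℕ} : hamming (fun _ => false : Fin n → Bool) = 0 := by
  simp [hamming]

@[simp] lemma bdot_zero {n : ℕ} (x : Fin n → Bool) : bdot x (fun _ => false) = 0 := by
  simp [bdot]

lemma sum_pow_hamming {n : ℕ} (t : ℝ) : ∑ r : Fin n → Bool, t ^ hamming r = (1 + t) ^ n := by
  have h : (1 + t) ^ n = ∏ _i : Fin n, ∑ b : Bool, (if b then t else 1) := by
    simp [add_comm]
  rw [h, prod_univ_sum, Fintype.piFinset_univ]
  refine sum_congr rfl fun r _ => ?_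
  rw [hamming, ← prod_pow_eq_pow_sum]
  exact prod_congr rfl fun i _ => by split <;> simp

lemma sum_erase_zero_pow_hamming {n : ℕ} (t : ℝ) :
    ∑ r ∈ univ.erase (fun _ => false : Fin n → Bool), t ^ hamming r = (1 + t) ^ n - 1 := by
  rw [← sum_pow_hamming, ← add_sum_erase _ _ (mem_univ _), hamming_zero, pow_zero,
    add_sub_cancel_left]

lemma cos_pow_sub_mul_sin_pow {x : ℝ} (hx : Real.cos x ≠ 0) {k n : ℕ} (hk : k ≤ n) :
    Real.cos x ^ (n - k) * Real.sin x ^ k = Real.cos x ^ n * Real.tan x ^ k := by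
  rw [← Real.tan_mul_cos hx, ← pow_mul_pow_sub (Real.cos x) hk]
  ring

lemma one_add_pow_lt_two {n : ℕ} {t : ℝ} (ht : -1 ≤ t) (h : t < (2 : ℝ) ^ ((n : ℝ)⁻¹) - 1) :
    (1 + t) ^ n < 2 := by
  rcases n.eq_zero_or_pos with rfl | hn
  · norm_num
  · calc (1 + t) ^ n < ((2 : ℝ) ^ ((n : ℝ)⁻¹)) ^ n :=
          pow_lt_pow_left₀ (by linarith) (by linarith) hn.ne'
      _ = 2 := by
          rw [← Real.rpow_natCast, ← Real.rpow_mul zero_le_two,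
            inv_mul_cancel₀ (Nat.cast_ne_zero.mpr hn.ne'), Real.rpow_one]

theorem pbr_dual_certificate_feasible_general
    {n : ℕ} (θ : ℝ) (hθ0 : 0 ≤ θ) (hθ1 : θ < Real.pi / 2)
    (hθ2 : Real.tan (θ / 2) < (2 : ℝ) ^ ((n : ℝ)⁻¹) - 1)
    (Ψ : (Fin n → Bool) → (Fin n → Bool) → ℂ)
    (hΨ : ∀ x r, Ψ x r = (-1 : ℂ) ^ bdot x r *
      ((Real.cos (θ / 2) ^ (n - hamming r) * Real.sin (θ / 2) ^ hamming r : ℝ) : ℂ))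
    (C : ℝ)
    (hC : C = (2 ^ n : ℝ)⁻¹ * Real.cos (θ / 2) ^ (2 * n) *
      (2 - (1 + Real.tan (θ / 2)) ^ n))
    (N : Matrix (Fin n → Bool) (Fin n → Bool) ℂ)
    (hN : N = Matrix.diagonal (fun r =>
      if r = (fun _ => false) then (C : ℂ)
      else -(C : ℂ) * ((Real.tan (θ / 2) ^ hamming r : ℝ) : ℂ))) :
    ∀ x : Fin n → Bool,
      (((2 : ℂ) ^ n)⁻¹ •
        Matrix.vecMulVec (Ψ x) (fun q => (starRingEnd ℂ) (Ψ x q)) - N).PosSemidef := by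
  intro x
  set t := Real.tan (θ / 2)
  set c := Real.cos (θ / 2)
  have hc : 0 < c := Real.cos_pos_of_mem_Ioo ⟨by linarith [Real.pi_pos], by linarith⟩
  have ht : 0 ≤ t := Real.tan_nonneg_of_nonneg_of_le_pi_div_two (by linarith) (by linarith)
  set a : (Fin n → Bool) → ℂ := fun r => (-1) ^ bdot x r * ((t ^ hamming r : ℝ) : ℂ)
  have hΨa : Ψ x = fun r => ((c ^ n : ℝ) : ℂ) * a r := by
    ext r
    rw [hΨ, cos_pow_sub_mul_sin_pow hc.ne' (hamming_le r)]
    simp only [a, Complex.ofReal_mul, Complex.ofReal_pow]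
    ring
  have hPSD := posSemidef_vecMulVec_sub_diagonal (𝕜 := ℂ) (fun _ => false) a
    (fun r => t ^ hamming r) (by simp [a]) (fun r _ => by simp [a, abs_of_nonneg ht])
    (by linarith [sum_erase_zero_pow_hamming (n := n) t, one_add_pow_lt_two (by linarith) hθ2])
  have hM : ((2 : ℂ) ^ n)⁻¹ • vecMulVec (Ψ x) (fun q => (starRingEnd ℂ) (Ψ x q)) - N
      = (((2 ^ n : ℝ)⁻¹ * c ^ (2 * n) : ℝ) : ℂ) • (vecMulVec a (star a) - diagonal (fun r =>
        (((1 - ∑ j ∈ univ.erase (fun _ => false : Fin n → Bool), t ^ hamming j) *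
          if r = (fun _ => false) then 1 else -t ^ hamming r : ℝ) : ℂ))) := by
    rw [sum_erase_zero_pow_hamming, hN, hC, hΨa]
    ext i j
    simp only [Matrix.sub_apply, Matrix.smul_apply, vecMulVec_apply, diagonal_apply,
      Pi.star_apply, smul_eq_mul, map_mul, Complex.conj_ofReal, RCLike.star_def]
    split_ifs <;> push_cast <;> ring
  rw [hM]
  exact hPSD.smul (by rw [Complex.zero_le_real]; positivity)

/-- Feasibility of the dual certificate in the PBR game: when
`tan(θ/2) < 2^{1/n} - 1`, the matrix `2^{-n}|Ψₓ⟩⟨Ψₓ| - N` is positive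
semidefinite for every `x`, where `N` is the diagonal matrix with entry `C(θ)`
at `0⃗` and `-C(θ) tan(θ/2)^{|r|}` at each `r ≠ 0⃗`. -/
theorem pbr_dual_certificate_feasible
    {n : ℕ} (hn : 1 ≤ n) (θ : ℝ) (hθ0 : 0 ≤ θ) (hθ1 : θ < Real.pi / 2)
    (hθ2 : Real.tan (θ / 2) < (2 : ℝ) ^ ((n : ℝ)⁻¹) - 1)
    (Ψ : (Fin n → Bool) → (Fin n → Bool) → ℂ)
    (hΨ : ∀ x r, Ψ x r = (-1 : ℂ) ^ bdot x r *
      ((Real.cos (θ / 2) ^ (n - hamming r) * Real.sin (θ / 2) ^ hamming r : ℝ) : ℂ))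
    (C : ℝ)
    (hC : C = (2 ^ n : ℝ)⁻¹ * Real.cos (θ / 2) ^ (2 * n) *
      (2 - (1 + Real.tan (θ / 2)) ^ n))
    (N : Matrix (Fin n → Bool) (Fin n → Bool) ℂ)
    (hN : N = Matrix.diagonal (fun r =>
      if r = (fun _ => false) then (C : ℂ)
      else -(C : ℂ) * ((Real.tan (θ / 2) ^ hamming r : ℝ) : ℂ))) :
    ∀ x : Fin n → Bool,
      (((2 : ℂ) ^ n)⁻¹ •
        Matrix.vecMulVec (Ψ x) (fun q => (starRingEnd ℂ) (Ψ x q)) - N).PosSemidef :=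
  pbr_dual_certificate_feasible_general θ hθ0 hθ1 hθ2 Ψ hΨ C hC N hN
end

section
/- Let {ρ_i}_{i=1}^k be density matrices on a d-dimensional complex Hilbert space, prepared with probabilities p_i, and write ρ̃_i = p_i ρ_i. Suppose N is a Hermitian d×d complex matrix and a_1,…,a_k are nonnegative reals with ∑_{i=1}^k a_i ≤ 1 such that a_i ρ̃_i − N is positive semidefinite for every i. Then for every measurement (POVM) {M_i}_{i=1}^k, the worst case error satisfies max_{1≤i≤k} tr(ρ̃_i M_i) ≥ tr(N). (Weak duality for the worst case error state exclusion semidefinite program.) -/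
/-!
Pairing the feasibility constraint `a i • ρ̃ i - N ⪰ 0` with `M i ⪰ 0` gives
`tr (N M i) ≤ a i * tr (ρ̃ i M i)`. Summing over `i` and using `∑ i, M i = 1` yields
`tr N ≤ ∑ i, a i * tr (ρ̃ i M i)`, and a nonnegative combination of total weight at most one of
the nonnegative numbers `tr (ρ̃ i M i)` is at most their maximum.
-/

open Matrix BigOperators ComplexOrder

namespace Matrix

variable {n 𝕜 : Type*} [Fintype n] [RCLike 𝕜]

open scoped MatrixOrder in
theorem PosSemidef.trace_mul_nonneg {A B : Matrix n n 𝕜} (hA : A.PosSemidef)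
    (hB : B.PosSemidef) : 0 ≤ (A * B).trace := by
  classical
  obtain ⟨X, rfl⟩ := CStarAlgebra.nonneg_iff_eq_star_mul_self.mp hB.nonneg
  rw [← Matrix.mul_assoc, trace_mul_cycle, star_eq_conjTranspose]
  exact (hA.mul_mul_conjTranspose_same X).trace_nonneg

theorem re_trace_mul_le_of_posSemidef_sub {A B M : Matrix n n 𝕜} (hBA : (B - A).PosSemidef)
    (hM : M.PosSemidef) : RCLike.re (A * M).trace ≤ RCLike.re (B * M).trace := by
  have h := (RCLike.nonneg_iff.mp (hBA.trace_mul_nonneg hM)).1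
  rwa [Matrix.sub_mul, trace_sub, map_sub, sub_nonneg] at h

theorem trace_eq_sum_trace_mul_of_sum_eq_one [DecidableEq n] {ι : Type*} [Fintype ι]
    (N : Matrix n n 𝕜) {M : ι → Matrix n n 𝕜} (hM : ∑ i, M i = 1) :
    N.trace = ∑ i, (N * M i).trace := by
  rw [← trace_sum, ← Matrix.mul_sum, hM, Matrix.mul_one]

end Matrix

theorem Finset.sum_mul_le_sup' {ι : Type*} {s : Finset ι} (hs : s.Nonempty) {a f : ι → ℝ}
    (ha : ∀ i ∈ s, 0 ≤ a i) (hasum : ∑ i ∈ s, a i ≤ 1) (hf : ∀ i ∈ s, 0 ≤ f i) :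
    ∑ i ∈ s, a i * f i ≤ s.sup' hs f := by
  have hsup : 0 ≤ s.sup' hs f := (hf _ hs.choose_spec).trans (s.le_sup' f hs.choose_spec)
  calc ∑ i ∈ s, a i * f i ≤ ∑ i ∈ s, a i * s.sup' hs f :=
        sum_le_sum fun i hi => mul_le_mul_of_nonneg_left (s.le_sup' f hi) (ha i hi)
    _ = (∑ i ∈ s, a i) * s.sup' hs f := (sum_mul ..).symm
    _ ≤ s.sup' hs f := mul_le_of_le_one_left hsup hasum

theorem worst_case_exclusion_weak_duality_general
    {d k : ℕ} (hk : 0 < k) (ρ : Fin k → Matrix (Fin d) (Fin d) ℂ)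
    (hρ : ∀ i, (ρ i).PosSemidef)
    (p : Fin k → ℝ) (hp : ∀ i, 0 ≤ p i)
    (N : Matrix (Fin d) (Fin d) ℂ)
    (a : Fin k → ℝ) (ha : ∀ i, 0 ≤ a i) (hasum : ∑ i, a i ≤ 1)
    (hfeas : ∀ i, ((a i : ℂ) • ((p i : ℂ) • ρ i) - N).PosSemidef)
    (M : Fin k → Matrix (Fin d) (Fin d) ℂ)
    (hM : ∀ i, (M i).PosSemidef) (hMsum : ∑ i, M i = 1) :
    N.trace.re ≤
      Finset.univ.sup'
        (Finset.univ_nonempty_iff.mpr (Fin.pos_iff_nonempty.mp hk))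
        (fun i => ((p i : ℂ) • ρ i * M i).trace.re) := by
  have hpair (i : Fin k) : (N * M i).trace.re ≤ a i * ((p i : ℂ) • ρ i * M i).trace.re := by
    simpa [Matrix.smul_mul, trace_smul] using re_trace_mul_le_of_posSemidef_sub (hfeas i) (hM i)
  have hterm (i : Fin k) : 0 ≤ ((p i : ℂ) • ρ i * M i).trace.re :=
    (RCLike.nonneg_iff.mp (((hρ i).smul (Complex.zero_le_real.mpr (hp i))).trace_mul_nonneg
      (hM i))).1
  calc N.trace.re = ∑ i, (N * M i).trace.re := by
        rw [trace_eq_sum_trace_mul_of_sum_eq_one N hMsum, Complex.re_sum]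
    _ ≤ ∑ i, a i * ((p i : ℂ) • ρ i * M i).trace.re := Finset.sum_le_sum fun i _ => hpair i
    _ ≤ _ := Finset.sum_mul_le_sup' _ (fun i _ => ha i) hasum (fun i _ => hterm i)

/-- Weak duality for the worst case error state exclusion SDP. -/
theorem worst_case_exclusion_weak_duality
    {d k : ℕ} (hk : 0 < k) (ρ : Fin k → Matrix (Fin d) (Fin d) ℂ)
    (hρ : ∀ i, (ρ i).PosSemidef) (hρtr : ∀ i, (ρ i).trace = 1)
    (p : Fin k → ℝ) (hp : ∀ i, 0 ≤ p i) (hpsum : ∑ i, p i = 1)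
    (N : Matrix (Fin d) (Fin d) ℂ) (hN : N.IsHermitian)
    (a : Fin k → ℝ) (ha : ∀ i, 0 ≤ a i) (hasum : ∑ i, a i ≤ 1)
    (hfeas : ∀ i, ((a i : ℂ) • ((p i : ℂ) • ρ i) - N).PosSemidef)
    (M : Fin k → Matrix (Fin d) (Fin d) ℂ)
    (hM : ∀ i, (M i).PosSemidef) (hMsum : ∑ i, M i = 1) :
    N.trace.re ≤
      Finset.univ.sup'
        (Finset.univ_nonempty_iff.mpr (Fin.pos_iff_nonempty.mp hk))
        (fun i => ((p i : ℂ) • ρ i * M i).trace.re) :=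
  worst_case_exclusion_weak_duality_general hk ρ hρ p hp N a ha hasum hfeas M hM hMsum
end
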